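/- Let i and i' be two reduced expressions for the longest element w0 of the symmetric group S_{n+1} that differ by a single long braid move (replacing a consecutive subword (j, j±1, j) by (j±1, j, j±1)). Consider the crossings in their wiring (chamber) diagrams: the sequence of transpositions (p,q) crossed. Then the sequences of crossings of i and i' agree except on three consecutive crossings, where (pq),(pr),(qr) in one is replaced by (qr),(pr),(pq) in the other, for some p < q < r. -/

import Mathlib

namespace BraidCross
variable {n : ℕ}

def S (m : Fin n) : Equiv.Perm (Fin (n + 1)) := Equiv.swap m.castSucc m.succ

lemma swap_lt (x : Fin n) {a b : Fin (n + 1)} (hab : a < b)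
    (hne : ¬(a = x.castSucc ∧ b = x.succ)) : S x a < S x b := by
  have h1 : S x a = if a = x.castSucc then x.succ else if a = x.succ then x.castSucc else a :=
    Equiv.swap_apply_def _ _ a
  have h2 : S x b = if b = x.castSucc then x.succ else if b = x.succ then x.castSucc else b :=
    Equiv.swap_apply_def _ _ b
  rw [h1, h2]
  split_ifs <;>
    simp only [Fin.ext_iff, Fin.lt_def, Fin.coe_castSucc, Fin.val_succ, not_and] at * <;> omega

def invCount (σ : Equiv.Perm (Fin (n + 1))) : ℕ :=
  (Finset.univ.filter fun p : Fin (n + 1) × Fin (n + 1) => p.1 < p.2 ∧ σ p.2 < σ p.1).card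

lemma S_self (x : Fin n) (a : Fin (n + 1)) : S x (S x a) = a := Equiv.swap_apply_self _ _ _

lemma invCount_erase (σ : Equiv.Perm (Fin (n + 1))) (x : Fin n) :
    ((Finset.univ.filter fun p : Fin (n + 1) × Fin (n + 1) =>
        p.1 < p.2 ∧ (σ * S x) p.2 < (σ * S x) p.1).erase (x.castSucc, x.succ)).card
    = ((Finset.univ.filter fun p : Fin (n + 1) × Fin (n + 1) =>
        p.1 < p.2 ∧ σ p.2 < σ p.1).erase (x.castSucc, x.succ)).card := by
  apply Finset.card_bij' (fun p _ => (S x p.1, S x p.2)) (fun p _ => (S x p.1, S x p.2))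
  · rintro ⟨a, b⟩ hp
    simp only [Finset.mem_erase, Finset.mem_filter, Finset.mem_univ, true_and] at hp ⊢
    simp only [Finset.mem_erase, Finset.mem_filter, Finset.mem_univ, true_and,
      Equiv.Perm.mul_apply, Prod.mk.injEq, not_and, ne_eq] at hp ⊢
    obtain ⟨hne, hab, hinv⟩ := hp
    have hlt : S x a < S x b := swap_lt x hab (by
      rintro ⟨rfl, rfl⟩; exact hne rfl rfl)
    refine ⟨?_, hlt, hinv⟩
    intro h1 h2
    have : a = x.succ := by rw [← S_self x a, h1]; exact Equiv.swap_apply_left _ _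
    have hb : b = x.castSucc := by rw [← S_self x b, h2]; exact Equiv.swap_apply_right _ _
    rw [this, hb] at hab
    exact absurd hab (not_lt.2 (Fin.castSucc_lt_succ (i := x)).le)
  · rintro ⟨a, b⟩ hp
    simp only [Finset.mem_erase, Finset.mem_filter, Finset.mem_univ, true_and] at hp ⊢
    simp only [Finset.mem_erase, Finset.mem_filter, Finset.mem_univ, true_and,
      Equiv.Perm.mul_apply, Prod.mk.injEq, not_and, ne_eq] at hp ⊢
    obtain ⟨hne, hab, hinv⟩ := hp
    have hlt : S x a < S x b := swap_lt x hab (by rintro ⟨rfl, rfl⟩; exact hne rfl rfl)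
    refine ⟨?_, hlt, by rw [S_self, S_self]; exact hinv⟩
    intro h1 h2
    have : a = x.succ := by rw [← S_self x a, h1]; exact Equiv.swap_apply_left _ _
    have hb : b = x.castSucc := by rw [← S_self x b, h2]; exact Equiv.swap_apply_right _ _
    rw [this, hb] at hab
    exact absurd hab (not_lt.2 (Fin.castSucc_lt_succ (i := x)).le)
  · rintro ⟨a, b⟩ _; simp [S_self]
  · rintro ⟨a, b⟩ _; simp [S_self]

lemma invCount_step (σ : Equiv.Perm (Fin (n + 1))) (x : Fin n) :
    ((σ x.castSucc < σ x.succ) → invCount (σ * S x) = invCount σ + 1) ∧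
    ((σ x.succ < σ x.castSucc) → invCount σ = invCount (σ * S x) + 1) := by
  have hkey := invCount_erase σ x
  set z : Fin (n + 1) × Fin (n + 1) := (x.castSucc, x.succ) with hz
  have hzlt : x.castSucc < x.succ := Fin.castSucc_lt_succ (i := x)
  have hA : z ∈ (Finset.univ.filter fun p : Fin (n + 1) × Fin (n + 1) =>
      p.1 < p.2 ∧ σ p.2 < σ p.1) ↔ σ x.succ < σ x.castSucc := by
    simp [hz, hzlt]
  have hA' : z ∈ (Finset.univ.filter fun p : Fin (n + 1) × Fin (n + 1) =>
      p.1 < p.2 ∧ (σ * S x) p.2 < (σ * S x) p.1) ↔ σ x.castSucc < σ x.succ := by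
    rw [Finset.mem_filter]
    simp [hz, hzlt, Equiv.Perm.mul_apply, S, Equiv.swap_apply_left, Equiv.swap_apply_right]
  constructor
  · intro h
    have h1 : z ∈ _ := hA'.2 h
    have h2 : z ∉ _ := fun hm => absurd h (not_lt.2 (hA.1 hm).le)
    unfold invCount
    rw [← Finset.card_erase_add_one h1, hkey, Finset.erase_eq_of_notMem h2]
  · intro h
    have h1 : z ∈ _ := hA.2 h
    have h2 : z ∉ _ := fun hm => absurd h (not_lt.2 (hA'.1 hm).le)
    unfold invCount
    rw [← Finset.card_erase_add_one h1, ← hkey, Finset.erase_eq_of_notMem h2]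

lemma invCount_one : invCount (1 : Equiv.Perm (Fin (n + 1))) = 0 := by
  unfold invCount
  convert Finset.card_empty
  rw [Finset.eq_empty_iff_forall_notMem]
  rintro ⟨a, b⟩ h
  simp only [Finset.mem_filter] at h
  simp only [Finset.mem_filter, Equiv.Perm.one_apply] at h
  exact absurd h.2.2 (not_lt.2 h.2.1.le)

lemma invCount_mul_le (σ : Equiv.Perm (Fin (n + 1))) (u : List (Fin n)) :
    invCount (σ * (u.map S).prod) ≤ invCount σ + u.length := by
  induction u generalizing σ with
  | nil => simp
  | cons x u ih =>
    have h1 : σ * ((x :: u).map S).prod = (σ * S x) * (u.map S).prod := by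
      simp [mul_assoc]
    rw [h1]
    refine (ih (σ * S x)).trans ?_
    have hstep := invCount_step σ x
    have hd : σ x.castSucc ≠ σ x.succ :=
      fun h => absurd (σ.injective h) (Fin.castSucc_lt_succ (i := x)).ne
    rcases hd.lt_or_gt with h | h
    · rw [hstep.1 h]; simp [List.length_cons]; omega
    · have := hstep.2 h; simp [List.length_cons]; omega

lemma invCount_le (u : List (Fin n)) : invCount ((u.map S)).prod ≤ u.length := by
  have := invCount_mul_le (1 : Equiv.Perm (Fin (n + 1))) u
  rwa [one_mul, invCount_one, zero_add] at this

lemma invCount_revPerm : invCount (Fin.revPerm : Equiv.Perm (Fin (n + 1))) = n * (n + 1) / 2 := by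
  unfold invCount
  have h1 : (Finset.univ.filter fun p : Fin (n + 1) × Fin (n + 1) =>
      p.1 < p.2 ∧ Fin.revPerm p.2 < Fin.revPerm p.1)
      = Finset.univ.filter fun p : Fin (n + 1) × Fin (n + 1) => p.1 < p.2 := by
    apply Finset.filter_congr
    intro p _
    simp [Fin.rev_lt_rev, and_self_iff]
  rw [h1]
  have hcard : (Finset.univ.filter fun p : Fin (n + 1) × Fin (n + 1) => p.1 < p.2).card
      = (Finset.univ.filter fun p : Fin (n + 1) × Fin (n + 1) => p.2 < p.1).card := by
    apply Finset.card_bij' (fun p _ => (p.2, p.1)) (fun p _ => (p.2, p.1)) <;>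
      rintro ⟨a, b⟩ hp <;> simp_all
  have hdisj : Disjoint (Finset.univ.filter fun p : Fin (n + 1) × Fin (n + 1) => p.1 < p.2)
      (Finset.univ.filter fun p : Fin (n + 1) × Fin (n + 1) => p.2 < p.1) := by
    rw [Finset.disjoint_left]
    intro p hpL hpG
    simp only [Finset.mem_filter, Finset.mem_univ, true_and] at hpL hpG
    exact absurd hpG (not_lt.2 hpL.le)
  have hunion : (Finset.univ.filter fun p : Fin (n + 1) × Fin (n + 1) => p.1 < p.2)
      ∪ (Finset.univ.filter fun p : Fin (n + 1) × Fin (n + 1) => p.2 < p.1)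
      = (Finset.univ : Finset (Fin (n + 1))).offDiag := by
    ext ⟨a, b⟩
    simp only [Finset.mem_union, Finset.mem_filter, Finset.mem_univ, true_and,
      Finset.mem_offDiag, ne_eq]
    exact ne_iff_lt_or_gt.symm
  have hcard2 := Finset.card_union_of_disjoint hdisj
  rw [hunion, Finset.offDiag_card] at hcard2
  simp only [Finset.card_univ, Fintype.card_fin] at hcard2
  have harith : (n + 1) * (n + 1) - (n + 1) = n * (n + 1) := by
    rw [Nat.succ_mul n (n + 1)]; omega
  omega

lemma reduced_at (u : List (Fin n)) (hlen : u.length = n * (n + 1) / 2)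
    (hu : (u.map S).prod = Fin.revPerm) (t : ℕ) (ht : t < u.length) (d : Fin n) :
    ((u.take t).map S).prod (u.getD t d).castSucc
      < ((u.take t).map S).prod (u.getD t d).succ := by
  set σ := ((u.take t).map S).prod with hσ
  set x := u.getD t d with hx
  by_contra hcon
  have hne : σ x.castSucc ≠ σ x.succ :=
    fun h => absurd (σ.injective h) (Fin.castSucc_lt_succ (i := x)).ne
  have hgt : σ x.succ < σ x.castSucc := (not_lt.1 hcon).lt_of_ne hne.symm
  have hstep := (invCount_step σ x).2 hgt
  -- decompose u
  have htake : u.take (t + 1) = u.take t ++ [x] := by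
    rw [List.take_succ, hx, List.getD_eq_getElem u d ht]
    simp [List.getElem?_eq_getElem ht]
  have hσt : invCount σ ≤ t := by
    have := invCount_le (u.take t)
    rwa [List.length_take, min_eq_left ht.le] at this
  have hsplit : (u.map S).prod = (σ * S x) * ((u.drop (t + 1)).map S).prod := by
    conv_lhs => rw [← List.take_append_drop (t + 1) u]
    rw [List.map_append, List.prod_append, htake, List.map_append, List.prod_append]
    simp [hσ, mul_assoc]
  have hfinal : invCount ((u.map S).prod) ≤ invCount (σ * S x) + (u.length - (t + 1)) := by
    rw [hsplit]
    have := invCount_mul_le (σ * S x) (u.drop (t + 1))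
    rwa [List.length_drop] at this
  rw [hu, invCount_revPerm] at hfinal
  omega

lemma braid_rel {x y : Fin n} (hxy : (x : ℕ) + 1 = y) : S x * S y * S x = S y * S x * S y := by
  have hj : x.succ = y.castSucc := by simp [Fin.ext_iff, hxy]
  have hij : x.castSucc ≠ x.succ := (Fin.castSucc_lt_succ (i := x)).ne
  have hjk : x.succ ≠ y.succ := by simp [Fin.ext_iff]; omega
  have hik : x.castSucc ≠ y.succ := by simp [Fin.ext_iff]; omega
  have hSx : S x = Equiv.swap x.castSucc x.succ := rfl
  have hSy : S y = Equiv.swap x.succ y.succ := by rw [S, ← hj]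
  rw [hSx, hSy]
  have h1 := Equiv.swap_apply_apply (Equiv.swap x.castSucc x.succ) x.succ y.succ
  rw [Equiv.swap_apply_right, Equiv.swap_apply_of_ne_of_ne hik.symm hjk.symm,
    Equiv.swap_inv] at h1
  have h2 := Equiv.swap_apply_apply (Equiv.swap x.succ y.succ) x.castSucc x.succ
  rw [Equiv.swap_apply_left, Equiv.swap_apply_of_ne_of_ne hij hik, Equiv.swap_inv] at h2
  rw [← h1, h2]

def cr (d : Fin n) (u : List (Fin n)) (t : ℕ) : Fin (n + 1) × Fin (n + 1) :=
  (((u.take t).map S).prod (u.getD t d).castSucc,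
   ((u.take t).map S).prod (u.getD t d).succ)

lemma braid_rel' (x y : Fin n) (hxy : (x : ℕ) + 1 = y ∨ (y : ℕ) + 1 = x) :
    S x * S y * S x = S y * S x * S y := by
  rcases hxy with h | h
  · exact braid_rel h
  · exact (braid_rel h).symm

lemma prod_mid (l1 : List (Fin n)) (x y : Fin n) (hxy : (x : ℕ) + 1 = y ∨ (y : ℕ) + 1 = x) :
    ((l1 ++ [x, y, x]).map S).prod = ((l1 ++ [y, x, y]).map S).prod := by
  have h := braid_rel' x y hxy
  simp only [List.map_append, List.prod_append, List.map_cons, List.map_nil, List.prod_cons,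
    List.prod_nil, mul_one, ← mul_assoc, h]

lemma take_helper (l1 r : List (Fin n)) (c : ℕ) :
    (l1 ++ r).take (l1.length + c) = l1 ++ r.take c := by
  rw [List.take_append, List.take_of_length_le (Nat.le_add_right _ _)]
  congr 2
  omega

lemma getD_helper (d : Fin n) (l1 r : List (Fin n)) (c : ℕ) :
    (l1 ++ r).getD (l1.length + c) d = r.getD c d := by
  rw [List.getD_append_right _ _ _ _ (Nat.le_add_right _ _)]
  congr 1
  omega

lemma cross_outside (d : Fin n) (l1 l2 : List (Fin n)) (x y : Fin n)
    (hxy : (x : ℕ) + 1 = y ∨ (y : ℕ) + 1 = x) (t : ℕ)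
    (ht : t < l1.length ∨ l1.length + 3 ≤ t) :
    cr d (l1 ++ [x, y, x] ++ l2) t = cr d (l1 ++ [y, x, y] ++ l2) t := by
  rcases ht with ht | ht
  · have h1 : ∀ z1 z2 z3 : Fin n, (l1 ++ [z1, z2, z3] ++ l2).take t = l1.take t := by
      intro z1 z2 z3
      rw [List.append_assoc, List.take_append,
        Nat.sub_eq_zero_of_le ht.le]
      simp
    have h2 : ∀ z1 z2 z3 : Fin n, (l1 ++ [z1, z2, z3] ++ l2).getD t d = l1.getD t d := by
      intro z1 z2 z3
      rw [List.append_assoc, List.getD_append _ _ _ _ ht]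
    unfold cr
    rw [h1, h1, h2, h2]
  · have hA : (l1 ++ [x, y, x]).length = l1.length + 3 := by simp
    have hA' : (l1 ++ [y, x, y]).length = l1.length + 3 := by simp
    have t1 : (l1 ++ [x, y, x] ++ l2).take t
        = (l1 ++ [x, y, x]) ++ l2.take (t - (l1.length + 3)) := by
      rw [List.take_append, List.take_of_length_le (by omega), hA]
    have t2 : (l1 ++ [y, x, y] ++ l2).take t
        = (l1 ++ [y, x, y]) ++ l2.take (t - (l1.length + 3)) := by
      rw [List.take_append, List.take_of_length_le (by omega), hA']
    have g1 : (l1 ++ [x, y, x] ++ l2).getD t d = l2.getD (t - (l1.length + 3)) d := by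
      rw [List.getD_append_right _ _ _ _ (by omega), hA]
    have g2 : (l1 ++ [y, x, y] ++ l2).getD t d = l2.getD (t - (l1.length + 3)) d := by
      rw [List.getD_append_right _ _ _ _ (by omega), hA']
    unfold cr
    rw [t1, t2, g1, g2]
    have hm : (List.map S [x, y, x]).prod = (List.map S [y, x, y]).prod := by
      simpa [mul_assoc] using braid_rel' x y hxy
    simp only [List.map_append, List.prod_append, hm]

lemma eval_one (l1 : List (Fin n)) (a : Fin n) (c : Fin (n + 1)) :
    ((l1 ++ [a]).map S).prod c = (l1.map S).prod (S a c) := by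
  simp [List.map_append, List.prod_append, Equiv.Perm.mul_apply]

lemma eval_two (l1 : List (Fin n)) (a b : Fin n) (c : Fin (n + 1)) :
    ((l1 ++ [a, b]).map S).prod c = (l1.map S).prod (S a (S b c)) := by
  simp [List.map_append, List.prod_append, Equiv.Perm.mul_apply, mul_assoc]

lemma cross_middle (d : Fin n) (l1 l2 : List (Fin n)) (x y : Fin n) (hxy : (x : ℕ) + 1 = y)
    (hlen : (l1 ++ [x, y, x] ++ l2).length = n * (n + 1) / 2)
    (hw : ((l1 ++ [x, y, x] ++ l2).map S).prod = Fin.revPerm) :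
    ∃ p q r : Fin (n + 1), p < q ∧ q < r ∧
      cr d (l1 ++ [x, y, x] ++ l2) l1.length = (p, q) ∧
      cr d (l1 ++ [x, y, x] ++ l2) (l1.length + 1) = (p, r) ∧
      cr d (l1 ++ [x, y, x] ++ l2) (l1.length + 2) = (q, r) ∧
      cr d (l1 ++ [y, x, y] ++ l2) l1.length = (q, r) ∧
      cr d (l1 ++ [y, x, y] ++ l2) (l1.length + 1) = (p, r) ∧
      cr d (l1 ++ [y, x, y] ++ l2) (l1.length + 2) = (p, q) := by
  set σ := (l1.map S).prod with hσ
  have hj : x.succ = y.castSucc := by simp [Fin.ext_iff, hxy]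
  have hij : x.castSucc ≠ x.succ := (Fin.castSucc_lt_succ (i := x)).ne
  have hjk : x.succ ≠ y.succ := by simp [Fin.ext_iff]; omega
  have hik : x.castSucc ≠ y.succ := by simp [Fin.ext_iff]; omega
  -- swap application facts
  have hSxi : S x x.castSucc = x.succ := Equiv.swap_apply_left _ _
  have hSxj : S x x.succ = x.castSucc := Equiv.swap_apply_right _ _
  have hSxk : S x y.succ = y.succ := Equiv.swap_apply_of_ne_of_ne hik.symm hjk.symm
  have hSy' : S y = Equiv.swap x.succ y.succ := by rw [S, ← hj]
  have hSyi : S y x.castSucc = x.castSucc := by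
    rw [hSy']; exact Equiv.swap_apply_of_ne_of_ne hij hik
  have hSyj : S y x.succ = y.succ := by rw [hSy']; exact Equiv.swap_apply_left _ _
  have hSyk : S y y.succ = x.succ := by rw [hSy']; exact Equiv.swap_apply_right _ _
  -- take and getD computations
  have htake0 : ∀ z1 z2 z3 : Fin n,
      (l1 ++ [z1, z2, z3] ++ l2).take l1.length = l1 := by
    intro z1 z2 z3
    rw [List.append_assoc]
    simpa using take_helper l1 ([z1, z2, z3] ++ l2) 0
  have htake1 : ∀ z1 z2 z3 : Fin n,
      (l1 ++ [z1, z2, z3] ++ l2).take (l1.length + 1) = l1 ++ [z1] := by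
    intro z1 z2 z3
    rw [List.append_assoc]
    simpa using take_helper l1 ([z1, z2, z3] ++ l2) 1
  have htake2 : ∀ z1 z2 z3 : Fin n,
      (l1 ++ [z1, z2, z3] ++ l2).take (l1.length + 2) = l1 ++ [z1, z2] := by
    intro z1 z2 z3
    rw [List.append_assoc]
    simpa using take_helper l1 ([z1, z2, z3] ++ l2) 2
  have hget0 : ∀ z1 z2 z3 : Fin n, (l1 ++ [z1, z2, z3] ++ l2).getD l1.length d = z1 := by
    intro z1 z2 z3
    rw [List.append_assoc]
    simpa using getD_helper d l1 ([z1, z2, z3] ++ l2) 0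
  have hget1 : ∀ z1 z2 z3 : Fin n, (l1 ++ [z1, z2, z3] ++ l2).getD (l1.length + 1) d = z2 := by
    intro z1 z2 z3
    rw [List.append_assoc]
    simpa using getD_helper d l1 ([z1, z2, z3] ++ l2) 1
  have hget2 : ∀ z1 z2 z3 : Fin n, (l1 ++ [z1, z2, z3] ++ l2).getD (l1.length + 2) d = z3 := by
    intro z1 z2 z3
    rw [List.append_assoc]
    simpa using getD_helper d l1 ([z1, z2, z3] ++ l2) 2
  -- ordering from reducedness
  have hm0 : l1.length < (l1 ++ [x, y, x] ++ l2).length := by simp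
  have hm2 : l1.length + 2 < (l1 ++ [x, y, x] ++ l2).length := by simp
  have hpq : σ x.castSucc < σ x.succ := by
    have := reduced_at _ hlen hw l1.length hm0 d
    rwa [htake0, hget0] at this
  have hqr : σ x.succ < σ y.succ := by
    have := reduced_at _ hlen hw (l1.length + 2) hm2 d
    rw [htake2, hget2, eval_two l1 x y, eval_two l1 x y, hSyi, hSyj, hSxi, hSxk] at this
    exact this
  refine ⟨σ x.castSucc, σ x.succ, σ y.succ, hpq, hqr, ?_, ?_, ?_, ?_, ?_, ?_⟩
  · unfold cr
    rw [htake0, hget0]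
  · unfold cr
    rw [htake1, hget1, eval_one, eval_one, ← hj, hSxj, hSxk]
  · unfold cr
    rw [htake2, hget2, eval_two l1 x y, eval_two l1 x y, hSyi, hSyj, hSxi, hSxk]
  · unfold cr
    rw [htake0, hget0, ← hj]
  · unfold cr
    rw [htake1, hget1, eval_one, eval_one, hSyi, hSyj]
  · unfold cr
    rw [htake2, hget2, eval_two l1 y x, eval_two l1 y x, ← hj, hSxj, hSyi, hSxk, hSyk]

end BraidCross

open BraidCross in
/-- Let `w, w'` be reduced expressions for the longest element `w0` of `S_{n+1}`
(words of length `n(n+1)/2` in the 0-indexed generators `m : Fin n`, with product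
`w0`) which differ by a single long braid move `(x,y,x) ↦ (y,x,y)` with `|x - y| = 1`.
The crossing of a word `u` at step `t` is the ordered pair of string labels
`(σ (u_t), σ (u_t + 1))` where `σ = s_{u_1} ⋯ s_{u_{t-1}}`. Then the crossing
sequences of `w` and `w'` agree except on three consecutive crossings, where
`(p,q),(p,r),(q,r)` in one word is replaced by `(q,r),(p,r),(p,q)` in the other,
for some `p < q < r`. -/
theorem braid_move_swaps_three_consecutive_crossings (n : ℕ) (hn : 0 < n)
    (w w' : List (Fin n))
    (hlen : w.length = n * (n + 1) / 2) (hlen' : w'.length = n * (n + 1) / 2)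
    (hw : (w.map (fun m => Equiv.swap m.castSucc m.succ)).prod
      = (Fin.revPerm : Equiv.Perm (Fin (n + 1))))
    (hw' : (w'.map (fun m => Equiv.swap m.castSucc m.succ)).prod
      = (Fin.revPerm : Equiv.Perm (Fin (n + 1))))
    (hbraid : ∃ (l1 l2 : List (Fin n)) (x y : Fin n),
      ((x : ℕ) + 1 = y ∨ (y : ℕ) + 1 = x) ∧
      w = l1 ++ [x, y, x] ++ l2 ∧ w' = l1 ++ [y, x, y] ++ l2) :
    let cross : List (Fin n) → ℕ → Fin (n + 1) × Fin (n + 1) := fun u t =>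
      let σ := ((u.take t).map (fun m => Equiv.swap m.castSucc m.succ)).prod
      (σ (u.getD t ⟨0, hn⟩).castSucc, σ (u.getD t ⟨0, hn⟩).succ)
    ∃ (m : ℕ) (p q r : Fin (n + 1)), p < q ∧ q < r ∧ m + 3 ≤ w.length ∧
      (∀ t, t < m ∨ m + 3 ≤ t → cross w t = cross w' t) ∧
      ((cross w m = (p, q) ∧ cross w (m + 1) = (p, r) ∧ cross w (m + 2) = (q, r) ∧
        cross w' m = (q, r) ∧ cross w' (m + 1) = (p, r) ∧ cross w' (m + 2) = (p, q)) ∨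
       (cross w' m = (p, q) ∧ cross w' (m + 1) = (p, r) ∧ cross w' (m + 2) = (q, r) ∧
        cross w m = (q, r) ∧ cross w (m + 1) = (p, r) ∧ cross w (m + 2) = (p, q))) := by
  intro cross
  have hc : cross = cr (⟨0, hn⟩ : Fin n) := rfl
  obtain ⟨l1, l2, x, y, hxy, hwd, hw'd⟩ := hbraid
  subst hwd
  subst hw'd
  rw [hc]
  have hS : (fun m : Fin n => Equiv.swap m.castSucc m.succ) = S := rfl
  rw [hS] at hw hw'
  have hm3 : l1.length + 3 ≤ (l1 ++ [x, y, x] ++ l2).length := by simp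
  rcases hxy with h | h
  · obtain ⟨p, q, r, hpq, hqr, c1, c2, c3, c4, c5, c6⟩ :=
      cross_middle (⟨0, hn⟩ : Fin n) l1 l2 x y h hlen hw
    exact ⟨l1.length, p, q, r, hpq, hqr, hm3,
      fun t ht => cross_outside _ l1 l2 x y (Or.inl h) t ht,
      Or.inl ⟨c1, c2, c3, c4, c5, c6⟩⟩
  · obtain ⟨p, q, r, hpq, hqr, c1, c2, c3, c4, c5, c6⟩ :=
      cross_middle (⟨0, hn⟩ : Fin n) l1 l2 y x h hlen' hw'
    exact ⟨l1.length, p, q, r, hpq, hqr, hm3,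
      fun t ht => cross_outside _ l1 l2 x y (Or.inr h) t ht,
      Or.inr ⟨c1, c2, c3, c4, c5, c6⟩⟩
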